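/- Let J ≥ 3 and let C be a type-I quasi-cyclic code with J×L polynomial parity-check matrix H(x) over F_2[x]/(x^r−1), J+1 ≤ L. If there exist distinct rows j1,j2,j3 and distinct columns i1,i2,i3 such that h_{j1,i1}·h_{j2,i2}·h_{j3,i3} = h_{j1,i2}·h_{j2,i3}·h_{j3,i1} ≠ 0 in F_2[x]/(x^r−1) (a 6-cycle condition), then d_min(C) ≤ (J+1)! − 2(J−2)!. -/

import Mathlib

open Matrix BigOperators

noncomputable section

/-- The ring `F₂[x]/(xʳ−1)`, realized as the group algebra of `ℤ/rℤ` over `F₂`.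
    (For `r > 0` this is isomorphic to `F₂[x]/(xʳ−1)`, and the canonical representative
    of degree `< r` corresponds to the `Finsupp` on `ZMod r`.) -/
abbrev Rr (r : ℕ) : Type := AddMonoidAlgebra (ZMod 2) (ZMod r)

/-- The monomial `xᵃ`. -/
def mono {r : ℕ} (a : ZMod r) : Rr r := AddMonoidAlgebra.single a 1

/-- Weight of an element of `Rr r`: the number of nonzero coefficients. -/
def wt {r : ℕ} (p : Rr r) : ℕ := p.coeff.support.card

/-- Square submatrix of `H` given by the columns in `T`. -/
def colSub {J L : ℕ} {R : Type*} (H : Matrix (Fin J) (Fin L) R) (T : Finset (Fin L))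
    (h : T.card = J) : Matrix (Fin J) (Fin J) R :=
  fun j k => H j (T.orderIsoOfFin h k)

/-- Square submatrix of `H` given by the columns in `S \ {i}` where `S` has `J+1` elements. -/
def eraseSub {J L : ℕ} {R : Type*} (H : Matrix (Fin J) (Fin L) R) (S : Finset (Fin L))
    (hS : S.card = J + 1) (i : Fin L) (hi : i ∈ S) : Matrix (Fin J) (Fin J) R :=
  colSub H (S.erase i) (by rw [Finset.card_erase_of_mem hi, hS]; rfl)

def isCodeword {r : ℕ} {ι κ : Type*} [Fintype κ] (H : Matrix ι κ (Rr r)) (c : κ → Rr r) : Prop :=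
  ∀ j, ∑ i, H j i * c i = 0

/-- Hamming weight of a vector over `Rr r`. -/
def wH {r : ℕ} {κ : Type*} [Fintype κ] (c : κ → Rr r) : ℕ := ∑ i, wt (c i)

/-- Minimum Hamming distance of the code with parity-check matrix `H`. -/
def dmin {r : ℕ} {ι κ : Type*} [Fintype κ] (H : Matrix ι κ (Rr r)) : ℕ :=
  sInf {w | ∃ c, isCodeword H c ∧ c ≠ 0 ∧ wH c = w}

/-! Choose `J + 1` columns containing `i1, i2, i3` and, inside them, a maximal nonsingular square
submatrix, bordered by one more of these columns. The signed maximal minors of the resulting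
`n × (n + 1)` matrix form a nonzero codeword: expanding along any further row gives a bordered
minor, which is singular by maximality. Its weight is at most the sum of the weights of the minors,
and a minor of a type-I matrix has at most one monomial per permutation, so weight at most `n!`.
When `n = J`, every minor keeping the three cycle columns loses `2 (J - 3)!` terms: the 3-cycle of
those columns matches the permutations sending them to `(j1, j2, j3)` with those sending them to
`(j3, j1, j2)`, the 6-cycle condition makes matched terms equal, and they cancel in
characteristic 2.
-/

instance (r : ℕ) : CharP (Rr r) 2 := charP_of_injective_algebraMap' (ZMod 2) 2

open Equiv Finset Function

theorem factorial_card_sub_card_le_card_perm_eqOn {α : Type*} [Fintype α] [DecidableEq α]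
    (σ₀ : Perm α) (s : Finset α) :
    (Fintype.card α - #s).factorial ≤ #{σ : Perm α | ∀ x ∈ s, σ x = σ₀ x} := by
  have hcard : Fintype.card (Perm {x // x ∉ s}) = (Fintype.card α - #s).factorial := by
    rw [Fintype.card_perm, Fintype.card_subtype_compl, Fintype.card_coe]
  rw [← hcard, ← Finset.card_univ]
  refine card_le_card_of_injOn (fun π => σ₀ * Perm.ofSubtype π) (fun π _ => ?_)
    fun π _ π' _ h => Perm.ofSubtype_injective (mul_left_cancel h)
  simp +contextual [Perm.ofSubtype_apply_of_not_mem]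

section PermExpansion

variable {R : Type*} [CommRing R] {n : Type*} [Fintype n] [DecidableEq n]

-- `Equiv.swap c₁ c₂ * Equiv.swap c₁ c₃` is the 3-cycle `c₁ ↦ c₃ ↦ c₂ ↦ c₁`.
theorem prod_mul_threeCycle_eq_of_sixCycle (M : Matrix n n R) {r₁ r₂ r₃ c₁ c₂ c₃ : n}
    (hc₁₂ : c₁ ≠ c₂) (hc₁₃ : c₁ ≠ c₃) (hc₂₃ : c₂ ≠ c₃)
    (hcyc : M r₁ c₁ * M r₂ c₂ * M r₃ c₃ = M r₁ c₂ * M r₂ c₃ * M r₃ c₁) {σ : Perm n}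
    (h₁ : σ c₁ = r₁) (h₂ : σ c₂ = r₂) (h₃ : σ c₃ = r₃) :
    ∏ i, M ((σ * (Equiv.swap c₁ c₂ * Equiv.swap c₁ c₃)) i) i = ∏ i, M (σ i) i := by
  set s : Finset n := {c₁, c₂, c₃} with hs
  have hsplit : ∀ f : n → R, ∏ i, f i = f c₁ * (f c₂ * f c₃) * ∏ i ∈ sᶜ, f i := fun f => by
    rw [← prod_mul_prod_compl s f, hs, prod_insert (by simp [hc₁₂, hc₁₃]),
      prod_insert (by simp [hc₂₃]), prod_singleton]
  have hfix : ∀ x ∈ sᶜ, (Equiv.swap c₁ c₂ * Equiv.swap c₁ c₃) x = x := fun x hx => by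
    simp only [hs, mem_compl, mem_insert, mem_singleton, not_or] at hx
    rw [Perm.mul_apply, swap_apply_of_ne_of_ne hx.1 hx.2.2, swap_apply_of_ne_of_ne hx.1 hx.2.1]
  rw [hsplit, hsplit, prod_congr rfl fun x hx => by rw [Perm.mul_apply, hfix x hx]]
  simp only [Perm.mul_apply, swap_apply_left, swap_apply_right,
    swap_apply_of_ne_of_ne hc₁₃.symm hc₂₃.symm, swap_apply_of_ne_of_ne hc₁₂.symm hc₂₃, h₁, h₂, h₃]
  linear_combination (∏ i ∈ sᶜ, M (σ i) i) * hcyc.symm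

variable [CharP R 2]

theorem det_eq_sum_prod_of_charTwo (M : Matrix n n R) :
    M.det = ∑ σ : Perm n, ∏ i, M (σ i) i := by
  rw [Matrix.det_apply]
  refine sum_congr rfl fun σ _ => ?_
  rcases Int.units_eq_one_or (Perm.sign σ) with h | h <;>
    simp [h, Units.smul_def, CharTwo.neg_eq]

theorem exists_cancelling_perms_of_sixCycle (M : Matrix n n R) {r₁ r₂ r₃ c₁ c₂ c₃ : n}
    (hr₁₂ : r₁ ≠ r₂) (hr₁₃ : r₁ ≠ r₃) (hr₂₃ : r₂ ≠ r₃)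
    (hc₁₂ : c₁ ≠ c₂) (hc₁₃ : c₁ ≠ c₃) (hc₂₃ : c₂ ≠ c₃)
    (hcyc : M r₁ c₁ * M r₂ c₂ * M r₃ c₃ = M r₁ c₂ * M r₂ c₃ * M r₃ c₁) :
    ∃ T : Finset (Perm n), 2 * (Fintype.card n - 3).factorial ≤ #T ∧
      ∑ σ ∈ T, ∏ i, M (σ i) i = 0 := by
  obtain ⟨σ₀, hσ₀⟩ := Perm.exists_extending_pair ![c₁, c₂, c₃] ![r₁, r₂, r₃]
    (by simp [Injective, Fin.forall_fin_succ, hc₁₂, hc₁₃, hc₂₃, hc₁₂.symm, hc₁₃.symm, hc₂₃.symm])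
    (by simp [Injective, Fin.forall_fin_succ, hr₁₂, hr₁₃, hr₂₃, hr₁₂.symm, hr₁₃.symm, hr₂₃.symm])
  set s : Finset n := {c₁, c₂, c₃} with hs
  set g : Perm n := Equiv.swap c₁ c₂ * Equiv.swap c₁ c₃
  set P : Finset (Perm n) := {σ | ∀ x ∈ s, σ x = σ₀ x} with hP
  have hmemP : ∀ σ ∈ P, σ c₁ = r₁ ∧ σ c₂ = r₂ ∧ σ c₃ = r₃ := fun σ hσ => by
    simp only [hP, hs, mem_filter, mem_univ, true_and, mem_insert, mem_singleton,
      forall_eq_or_imp, forall_eq] at hσ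
    exact ⟨hσ.1.trans (hσ₀ 0), hσ.2.1.trans (hσ₀ 1), hσ.2.2.trans (hσ₀ 2)⟩
  have hdisj : Disjoint P (P.map (Equiv.mulRight g).toEmbedding) := by
    refine disjoint_left.2 fun σ hσ hσg => ?_
    obtain ⟨τ, hτ, rfl⟩ := mem_map.1 hσg
    have hτg : (τ * g) c₁ = r₃ := by
      simp [g, swap_apply_of_ne_of_ne hc₁₃.symm hc₂₃.symm, (hmemP τ hτ).2.2]
    exact hr₁₃ ((hmemP _ hσ).1.symm.trans hτg)
  refine ⟨P ∪ P.map (Equiv.mulRight g).toEmbedding, ?_, ?_⟩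
  · have : (Fintype.card n - #s).factorial ≤ #P := factorial_card_sub_card_le_card_perm_eqOn σ₀ s
    have hs_card : #s = 3 := by simp [hs, hc₁₂, hc₁₃, hc₂₃]
    rw [card_union_of_disjoint hdisj, card_map, ← hs_card]
    omega
  · rw [sum_union hdisj, sum_map, ← sum_add_distrib]
    refine sum_eq_zero fun σ hσ => ?_
    obtain ⟨h₁, h₂, h₃⟩ := hmemP σ hσ
    change ∏ i, M (σ i) i + ∏ i, M ((σ * g) i) i = 0
    rw [prod_mul_threeCycle_eq_of_sixCycle M hc₁₂ hc₁₃ hc₂₃ hcyc h₁ h₂ h₃,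
      CharTwo.add_self_eq_zero]

end PermExpansion

section Weight

variable {r : ℕ}

theorem wt_zero : wt (0 : Rr r) = 0 := rfl

theorem wt_mono (a : ZMod r) : wt (mono a) = 1 := by
  simp [wt, mono, AddMonoidAlgebra.coeff_single]

theorem wt_one : wt (1 : Rr r) = 1 := wt_mono 0

theorem wt_add_le (p q : Rr r) : wt (p + q) ≤ wt p + wt q :=
  (card_le_card Finsupp.support_add).trans (card_union_le _ _)

theorem wt_sum_le {ι : Type*} (s : Finset ι) (f : ι → Rr r) :
    wt (∑ i ∈ s, f i) ≤ ∑ i ∈ s, wt (f i) :=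
  le_sum_of_subadditive wt wt_zero.le wt_add_le s f

theorem wt_mul_le (p q : Rr r) : wt (p * q) ≤ wt p * wt q :=
  (card_le_card (AddMonoidAlgebra.support_coeff_mul_subset p q)).trans card_add_le

theorem wt_prod_le_one {ι : Type*} (s : Finset ι) (f : ι → Rr r) (h : ∀ i ∈ s, wt (f i) ≤ 1) :
    wt (∏ i ∈ s, f i) ≤ 1 :=
  prod_induction f (fun p => wt p ≤ 1)
    (fun p q hp hq => (wt_mul_le p q).trans (mul_le_one' hp hq)) wt_one.le h

variable {n : Type*} [Fintype n]

theorem wt_sum_perm_prod_le (M : Matrix n n (Rr r)) (hM : ∀ i j, wt (M i j) ≤ 1)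
    (T : Finset (Perm n)) : wt (∑ σ ∈ T, ∏ i, M (σ i) i) ≤ #T :=
  (wt_sum_le T _).trans (card_eq_sum_ones T ▸ sum_le_sum fun _ _ =>
    wt_prod_le_one _ _ fun _ _ => hM _ _)

theorem wt_det_le [DecidableEq n] (M : Matrix n n (Rr r)) (hM : ∀ i j, wt (M i j) ≤ 1) :
    wt M.det ≤ (Fintype.card n).factorial := by
  rw [det_eq_sum_prod_of_charTwo, ← Fintype.card_perm]
  exact wt_sum_perm_prod_le M hM univ

theorem wt_det_add_le_of_sixCycle [DecidableEq n] (M : Matrix n n (Rr r))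
    (hM : ∀ i j, wt (M i j) ≤ 1) {r₁ r₂ r₃ c₁ c₂ c₃ : n}
    (hr₁₂ : r₁ ≠ r₂) (hr₁₃ : r₁ ≠ r₃) (hr₂₃ : r₂ ≠ r₃)
    (hc₁₂ : c₁ ≠ c₂) (hc₁₃ : c₁ ≠ c₃) (hc₂₃ : c₂ ≠ c₃)
    (hcyc : M r₁ c₁ * M r₂ c₂ * M r₃ c₃ = M r₁ c₂ * M r₂ c₃ * M r₃ c₁) :
    wt M.det + 2 * (Fintype.card n - 3).factorial ≤ (Fintype.card n).factorial := by
  obtain ⟨T, hT, hsum⟩ :=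
    exists_cancelling_perms_of_sixCycle M hr₁₂ hr₁₃ hr₂₃ hc₁₂ hc₁₃ hc₂₃ hcyc
  have hdet : M.det = ∑ σ ∈ Tᶜ, ∏ i, M (σ i) i := by
    rw [det_eq_sum_prod_of_charTwo, ← sum_add_sum_compl T, hsum, zero_add]
  have hcard : #Tᶜ + #T = (Fintype.card n).factorial := by
    rw [card_compl, Nat.sub_add_cancel (card_le_univ T), Fintype.card_perm]
  have := wt_sum_perm_prod_le M hM Tᶜ
  rw [← hdet] at this
  omega

end Weight

section Cofactor

variable {R : Type*} [CommRing R] {ι κ : Type*} {n : ℕ}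

def cofactorVec (H : Matrix ι κ R) (w : Fin n → ι) (v : Fin (n + 1) → κ) : κ → R :=
  extend v (fun k => (-1) ^ (k : ℕ) * (H.submatrix w (v ∘ k.succAbove)).det) 0

theorem cofactorVec_apply {H : Matrix ι κ R} {w : Fin n → ι} {v : Fin (n + 1) → κ}
    (hv : Injective v) (k : Fin (n + 1)) :
    cofactorVec H w v (v k) = (-1) ^ (k : ℕ) * (H.submatrix w (v ∘ k.succAbove)).det :=
  hv.extend_apply _ _ k

theorem cofactorVec_apply_of_notMem_range {H : Matrix ι κ R} {w : Fin n → ι}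
    {v : Fin (n + 1) → κ} {i : κ} (hi : i ∉ Set.range v) : cofactorVec H w v i = 0 :=
  extend_apply' _ _ _ hi

theorem mulVec_cofactorVec [Fintype κ] {H : Matrix ι κ R} {w : Fin n → ι}
    {v : Fin (n + 1) → κ} (hv : Injective v)
    (hbord : ∀ j, (H.submatrix (Fin.cons j w) v).det = 0) :
    H *ᵥ cofactorVec H w v = 0 := by
  ext j
  -- Laplace expansion of the bordered minor along its first row `j`
  rw [Pi.zero_apply, ← hbord j, Matrix.det_succ_row_zero]
  refine (Fintype.sum_of_injective v hv _ _ (fun i hi => ?_) fun k => ?_).symm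
  · rw [cofactorVec_apply_of_notMem_range hi, mul_zero]
  · rw [cofactorVec_apply hv]
    simp only [submatrix_apply, Fin.cons_zero, submatrix_submatrix, Fin.cons_comp_succ]
    ring

end Cofactor

theorem exists_maximal_nonsingular_minor {R ι κ : Type*} [CommRing R] [Nontrivial R]
    [Fintype ι] [DecidableEq ι] [Fintype κ] (A : Matrix ι κ R)
    (hcard : Fintype.card ι < Fintype.card κ) :
    ∃ n ≤ Fintype.card ι, ∃ (w : Fin n → ι) (v : Fin (n + 1) → κ), Injective w ∧ Injective v ∧
      (A.submatrix w (v ∘ Fin.succ)).det ≠ 0 ∧ ∀ j, (A.submatrix (Fin.cons j w) v).det = 0 := by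
  classical
  let Good (m : ℕ) : Prop := ∃ (w : Fin m → ι) (z : Fin m → κ),
    Injective w ∧ Injective z ∧ (A.submatrix w z).det ≠ 0
  have good_zero : Good 0 :=
    ⟨finZeroElim, finZeroElim, fun a => a.elim0, fun a => a.elim0, by simp⟩
  set N := Nat.findGreatest Good (Fintype.card ι)
  have hN : N ≤ Fintype.card ι := Nat.findGreatest_le _
  obtain ⟨w, z, hw, hz, hdet⟩ : Good N := Nat.findGreatest_spec (Nat.zero_le _) good_zero
  obtain ⟨k₀, hk₀⟩ : ∃ k₀, k₀ ∉ Set.range z := by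
    by_contra! hsurj
    have := Fintype.card_le_of_surjective z fun k => hsurj k
    simp only [Fintype.card_fin] at this
    omega
  refine ⟨N, hN, w, Fin.cons k₀ z, hw, Fin.cons_injective_iff.2 ⟨hk₀, hz⟩, by simpa using hdet,
    fun j => ?_⟩
  by_cases hj : j ∈ Set.range w
  · obtain ⟨p, rfl⟩ := hj
    exact Matrix.det_zero_of_row_eq (Fin.succ_ne_zero p).symm (by ext; simp)
  · have hlt : N < Fintype.card ι := hN.lt_of_ne fun h =>
      hj (((Fintype.bijective_iff_injective_and_card w).2 ⟨hw, by simp [h]⟩).surjective j)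
    by_contra hne
    exact Nat.findGreatest_is_greatest (Nat.lt_succ_self N) hlt
      ⟨Fin.cons j w, Fin.cons k₀ z, Fin.cons_injective_iff.2 ⟨hj, hw⟩,
        Fin.cons_injective_iff.2 ⟨hk₀, hz⟩, hne⟩

theorem wH_cofactorVec {r n : ℕ} {ι κ : Type*} [Fintype κ] {H : Matrix ι κ (Rr r)}
    {w : Fin n → ι} {v : Fin (n + 1) → κ} (hv : Injective v) :
    wH (cofactorVec H w v) = ∑ k : Fin (n + 1), wt (H.submatrix w (v ∘ k.succAbove)).det :=
  (Fintype.sum_of_injective v hv _ _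
    (fun i hi => by rw [cofactorVec_apply_of_notMem_range hi, wt_zero])
    fun k => by simp [cofactorVec_apply hv, CharTwo.neg_eq]).symm

theorem dmin_le_sum_wt_minors {r n : ℕ} {ι κ : Type*} [Fintype κ] (H : Matrix ι κ (Rr r))
    (w : Fin n → ι) {v : Fin (n + 1) → κ} (hv : Injective v)
    (hbord : ∀ j, (H.submatrix (Fin.cons j w) v).det = 0)
    {k : Fin (n + 1)} (hk : (H.submatrix w (v ∘ k.succAbove)).det ≠ 0) :
    dmin H ≤ ∑ k : Fin (n + 1), wt (H.submatrix w (v ∘ k.succAbove)).det := by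
  refine Nat.sInf_le ⟨cofactorVec H w v, fun j => congrFun (mulVec_cofactorVec hv hbord) j,
    fun h => hk ?_, wH_cofactorVec hv⟩
  simpa [cofactorVec_apply hv, CharTwo.neg_eq] using congrFun h (v k)

section Minors

variable {r m : ℕ} {ι κ : Type*} (H : Matrix ι κ (Rr r)) (w : Fin m → ι) (v : Fin (m + 1) → κ)

theorem sum_wt_minors_le (hH : ∀ j i, wt (H j i) ≤ 1) :
    ∑ k : Fin (m + 1), wt (H.submatrix w (v ∘ k.succAbove)).det ≤ (m + 1).factorial := by
  calc ∑ k : Fin (m + 1), wt (H.submatrix w (v ∘ k.succAbove)).det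
      ≤ #(univ : Finset (Fin (m + 1))) • m.factorial :=
        sum_le_card_nsmul _ _ _ fun k _ => by
          simpa using wt_det_le (H.submatrix w (v ∘ k.succAbove)) fun _ _ => hH _ _
    _ = (m + 1).factorial := by simp [Nat.factorial_succ]

theorem sum_wt_minors_add_le_of_sixCycle (hH : ∀ j i, wt (H j i) ≤ 1)
    {ρ₁ ρ₂ ρ₃ : Fin m} {x₁ x₂ x₃ : Fin (m + 1)}
    (hρ₁₂ : ρ₁ ≠ ρ₂) (hρ₁₃ : ρ₁ ≠ ρ₃) (hρ₂₃ : ρ₂ ≠ ρ₃)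
    (hx₁₂ : x₁ ≠ x₂) (hx₁₃ : x₁ ≠ x₃) (hx₂₃ : x₂ ≠ x₃)
    (hcyc : H (w ρ₁) (v x₁) * H (w ρ₂) (v x₂) * H (w ρ₃) (v x₃) =
      H (w ρ₁) (v x₂) * H (w ρ₂) (v x₃) * H (w ρ₃) (v x₁)) :
    ∑ k : Fin (m + 1), wt (H.submatrix w (v ∘ k.succAbove)).det + 2 * (m - 2).factorial ≤
      (m + 1).factorial := by
  set D : Fin (m + 1) → ℕ := fun k => wt (H.submatrix w (v ∘ k.succAbove)).det
  set s : Finset (Fin (m + 1)) := {x₁, x₂, x₃} with hs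
  have hm : 3 ≤ m := by
    simpa [hρ₁₂, hρ₁₃, hρ₂₃] using card_le_univ ({ρ₁, ρ₂, ρ₃} : Finset (Fin m))
  have hs_compl : #sᶜ = m - 2 := by
    rw [card_compl, Fintype.card_fin, hs, card_insert_of_notMem (by simp [hx₁₂, hx₁₃]),
      card_insert_of_notMem (by simp [hx₂₃]), card_singleton]
    omega
  have hin : ∀ k, D k ≤ m.factorial := fun k => by
    simpa using wt_det_le (H.submatrix w (v ∘ k.succAbove)) fun _ _ => hH _ _
  -- a minor keeping the three columns `x₁, x₂, x₃` still contains the six-cycle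
  have hout : ∀ k ∈ sᶜ, D k + 2 * (m - 3).factorial ≤ m.factorial := fun k hk => by
    simp only [hs, mem_compl, mem_insert, mem_singleton, not_or] at hk
    obtain ⟨γ₁, rfl⟩ := Fin.exists_succAbove_eq (Ne.symm hk.1)
    obtain ⟨γ₂, rfl⟩ := Fin.exists_succAbove_eq (Ne.symm hk.2.1)
    obtain ⟨γ₃, rfl⟩ := Fin.exists_succAbove_eq (Ne.symm hk.2.2)
    simpa using wt_det_add_le_of_sixCycle (H.submatrix w (v ∘ k.succAbove))
      (fun _ _ => hH _ _) hρ₁₂ hρ₁₃ hρ₂₃ (ne_of_apply_ne _ hx₁₂) (ne_of_apply_ne _ hx₁₃)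
      (ne_of_apply_ne _ hx₂₃) hcyc
  have hfact : (m - 2).factorial = (m - 2) * (m - 3).factorial := by
    rw [show m - 2 = m - 3 + 1 by omega, Nat.factorial_succ]
  calc ∑ k, D k + 2 * (m - 2).factorial
      = ∑ k ∈ s, D k + ∑ k ∈ sᶜ, (D k + 2 * (m - 3).factorial) := by
        rw [sum_add_distrib, sum_const, hs_compl, smul_eq_mul, ← sum_add_sum_compl s, hfact]
        ring
    _ ≤ ∑ k ∈ s, m.factorial + ∑ k ∈ sᶜ, m.factorial :=
        add_le_add (sum_le_sum fun k _ => hin k) (sum_le_sum hout)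
    _ = (m + 1).factorial := by
        rw [sum_add_sum_compl, sum_const, card_univ, Fintype.card_fin, smul_eq_mul,
          Nat.factorial_succ]

end Minors

theorem factorial_le_factorial_succ_sub {J : ℕ} (hJ : 2 ≤ J) :
    J.factorial ≤ (J + 1).factorial - 2 * (J - 2).factorial := by
  have := Nat.factorial_le (Nat.sub_le J 2)
  rw [Nat.factorial_succ, add_one_mul]
  have : 2 * (J - 2).factorial ≤ J * J.factorial := by nlinarith
  omega

theorem typeI_six_cycle_dmin_general {r J L : ℕ} (hJ : 3 ≤ J) (hJL : J + 1 ≤ L)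
    (H : Matrix (Fin J) (Fin L) (Rr r))
    (htypeI : ∀ j i, H j i = 0 ∨ ∃ a, H j i = mono a)
    (j1 j2 j3 : Fin J) (i1 i2 i3 : Fin L)
    (hj12 : j1 ≠ j2) (hj13 : j1 ≠ j3) (hj23 : j2 ≠ j3)
    (hi12 : i1 ≠ i2) (hi13 : i1 ≠ i3) (hi23 : i2 ≠ i3)
    (hcyc : H j1 i1 * H j2 i2 * H j3 i3 = H j1 i2 * H j2 i3 * H j3 i1) :
    dmin H ≤ Nat.factorial (J + 1) - 2 * Nat.factorial (J - 2) := by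
  have hH : ∀ j i, wt (H j i) ≤ 1 := fun j i => by
    rcases htypeI j i with h | ⟨a, h⟩ <;> simp [h, wt_zero, wt_mono]
  obtain ⟨S, hiS, -, hS⟩ := exists_subsuperset_card_eq (n := J + 1) (subset_univ {i1, i2, i3})
    (card_le_three.trans (by omega)) (by simpa using hJL)
  obtain ⟨n, hnJ, w, v, hw, hv, hminor, hbord⟩ :=
    exists_maximal_nonsingular_minor (H.submatrix id ((↑) : S → Fin L)) (by simp [hS])
  have hd := dmin_le_sum_wt_minors H w (Subtype.val_injective.comp hv) hbord
    (k := 0) (by rwa [Fin.succAbove_zero])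
  rw [Fintype.card_fin] at hnJ
  rcases hnJ.lt_or_eq with hlt | rfl
  · exact hd.trans <| (sum_wt_minors_le H w (Subtype.val ∘ v) hH).trans <|
      (Nat.factorial_le hlt).trans (factorial_le_factorial_succ_sub (by omega))
  · have hw' : Surjective w := Finite.injective_iff_surjective.1 hw
    have hv' : ∀ i ∈ S, ∃ x, (v x : Fin L) = i := fun i hi =>
      (((Fintype.bijective_iff_injective_and_card v).2 ⟨hv, by simp [hS]⟩).2 ⟨i, hi⟩).imp
        fun _ => congrArg Subtype.val
    obtain ⟨⟨ρ1, rfl⟩, ⟨ρ2, rfl⟩, ⟨ρ3, rfl⟩⟩ := And.intro (hw' j1) (And.intro (hw' j2) (hw' j3))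
    obtain ⟨⟨x1, rfl⟩, ⟨x2, rfl⟩, ⟨x3, rfl⟩⟩ := And.intro (hv' i1 (hiS (by simp)))
      (And.intro (hv' i2 (hiS (by simp))) (hv' i3 (hiS (by simp))))
    have := sum_wt_minors_add_le_of_sixCycle H w (Subtype.val ∘ v) hH
      (ne_of_apply_ne w hj12) (ne_of_apply_ne w hj13) (ne_of_apply_ne w hj23)
      (ne_of_apply_ne (Subtype.val ∘ v) hi12) (ne_of_apply_ne (Subtype.val ∘ v) hi13)
      (ne_of_apply_ne (Subtype.val ∘ v) hi23) hcyc
    omega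

/-- a 6-cycle condition in a type-I code lowers the bound. -/
theorem typeI_six_cycle_dmin {r J L : ℕ} (hr : 0 < r) (hJ : 3 ≤ J) (hJL : J + 1 ≤ L)
    (H : Matrix (Fin J) (Fin L) (Rr r))
    (htypeI : ∀ j i, H j i = 0 ∨ ∃ a, H j i = mono a)
    (j1 j2 j3 : Fin J) (i1 i2 i3 : Fin L)
    (hj12 : j1 ≠ j2) (hj13 : j1 ≠ j3) (hj23 : j2 ≠ j3)
    (hi12 : i1 ≠ i2) (hi13 : i1 ≠ i3) (hi23 : i2 ≠ i3)
    (hcyc : H j1 i1 * H j2 i2 * H j3 i3 = H j1 i2 * H j2 i3 * H j3 i1)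
    (hnz : H j1 i1 * H j2 i2 * H j3 i3 ≠ 0) :
    dmin H ≤ Nat.factorial (J + 1) - 2 * Nat.factorial (J - 2) :=
  typeI_six_cycle_dmin_general hJ hJL H htypeI j1 j2 j3 i1 i2 i3 hj12 hj13 hj23 hi12 hi13 hi23 hcyc
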